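/- Let F be a complete set of k-MOFS(n;n/m), i.e. k = (n-1)^2/(m-1), and let F' be the d-dilation of F. If d^2 is not divisible by m, then F' is a maximal set of MOFS of type (dn;dn/m). -/

import Mathlib

def IsFreqSquare {n m : ℕ} (lam : ℕ) (F : Fin n → Fin n → Fin m) : Prop :=
  (∀ i : Fin n, ∀ s : Fin m, (Finset.univ.filter fun j => F i j = s).card = lam) ∧
  (∀ j : Fin n, ∀ s : Fin m, (Finset.univ.filter fun i => F i j = s).card = lam)

def AreOrth {n m : ℕ} (lam : ℕ) (F G : Fin n → Fin n → Fin m) : Prop :=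
  ∀ a b : Fin m,
    (Finset.univ.filter fun p : Fin n × Fin n => F p.1 p.2 = a ∧ G p.1 p.2 = b).card = lam ^ 2

def IsMaxFamily {n m k : ℕ} (lam : ℕ) (F : Fin k → Fin n → Fin n → Fin m) : Prop :=
  ¬ ∃ G : Fin n → Fin n → Fin m, IsFreqSquare lam G ∧ ∀ t, AreOrth lam (F t) G

def dilate {n m : ℕ} (d : ℕ) (hd : 0 < d) (F : Fin n → Fin n → Fin m) :
    Fin (d * n) → Fin (d * n) → Fin m :=
  fun i j =>
    F ⟨i.1 / d, (Nat.div_lt_iff_lt_mul hd).2 (Nat.lt_of_lt_of_eq i.2 (Nat.mul_comm d n))⟩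
      ⟨j.1 / d, (Nat.div_lt_iff_lt_mul hd).2 (Nat.lt_of_lt_of_eq j.2 (Nat.mul_comm d n))⟩

/-
Suppose `G` were a frequency square orthogonal to every dilated square, and fix a symbol `b`.
Let `S p` count the cells of the `d × d` block `p` on which `G` shows `b`. Orthogonality of `G`
to the dilated rows, columns and symbol classes says that `Y = m • S - d²` sums to zero along
every row, every column and every symbol class of every square of `F`.

For a complete set these line indicators span all of `ℚ^(n × n)`: the combination `cellProj p`
of them differs from the unit vector `e_p` by a vector orthogonal to all of them, so
`‖cellProj p - e_p‖² = cellProj p p - 1`, and completeness `k (m - 1) = (n - 1)²` is exactly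
what makes `cellProj p p = 1`. Hence `Y = 0`, i.e. `m • S p = d²`, contradicting `m ∤ d²`.
-/

open Finset

lemma Finset.sum_filter_fst_eq {α β M : Type*} [Fintype α] [Fintype β] [DecidableEq α]
    [AddCommMonoid M] (f : α × β → M) (a : α) : ∑ q with q.1 = a, f q = ∑ b, f (a, b) := by
  rw [sum_filter, Fintype.sum_prod_type, sum_eq_single a (fun x _ hx => by simp [hx]) (by simp)]
  simp

lemma Finset.sum_filter_snd_eq {α β M : Type*} [Fintype α] [Fintype β] [DecidableEq β]
    [AddCommMonoid M] (f : α × β → M) (b : β) : ∑ q with q.2 = b, f q = ∑ a, f (a, b) := by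
  rw [sum_filter, Fintype.sum_prod_type_right,
    sum_eq_single b (fun x _ hx => by simp [hx]) (by simp)]
  simp

lemma Finset.card_filter_fst_eq {α β : Type*} [Fintype α] [Fintype β] [DecidableEq α] (a : α) :
    #{q : α × β | q.1 = a} = Fintype.card β := by
  rw [card_eq_sum_ones, sum_filter_fst_eq, sum_const, card_univ, smul_eq_mul, mul_one]

lemma Finset.card_filter_snd_eq {α β : Type*} [Fintype α] [Fintype β] [DecidableEq β] (b : β) :
    #{q : α × β | q.2 = b} = Fintype.card α := by
  rw [card_eq_sum_ones, sum_filter_snd_eq, sum_const, card_univ, smul_eq_mul, mul_one]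

lemma Finset.card_filter_and_fst {α β : Type*} [Fintype α] [Fintype β] (R : α → β → Prop)
    [∀ a, DecidablePred (R a)] (P : α → Prop) [DecidablePred P] {c : ℕ}
    (hR : ∀ a, #{b | R a b} = c) : #{q : α × β | R q.1 q.2 ∧ P q.1} = c * #{a | P a} := by
  rw [card_filter, Fintype.sum_prod_type, card_eq_sum_ones, sum_filter, mul_sum]
  refine sum_congr rfl fun a _ => ?_
  by_cases ha : P a <;> simp [ha, hR]

lemma Finset.card_filter_and_snd {α β : Type*} [Fintype α] [Fintype β] (R : α → β → Prop)
    [∀ a, DecidablePred (R a)] (P : β → Prop) [DecidablePred P] {c : ℕ}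
    (hR : ∀ b, #{a | R a b} = c) : #{q : α × β | R q.1 q.2 ∧ P q.2} = c * #{b | P b} := by
  rw [card_filter, Fintype.sum_prod_type_right, card_eq_sum_ones, sum_filter, mul_sum]
  refine sum_congr rfl fun b _ => ?_
  by_cases hb : P b <;> simp [hb, hR]

lemma Finset.sum_card_filter_comm {α τ : Type*} [Fintype τ] (s : Finset α) (P : τ → α → Prop)
    [∀ t, DecidablePred (P t)] : ∑ x ∈ s, #{t | P t x} = ∑ t, #{x ∈ s | P t x} := by
  simp only [card_filter]
  exact sum_comm

section FreqSquare

variable {n m L : ℕ} {G : Fin n → Fin n → Fin m}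

lemma IsFreqSquare.card_filter_and_fst (hG : IsFreqSquare L G) (a : Fin m) (P : Fin n → Prop)
    [DecidablePred P] : #{q : Fin n × Fin n | G q.1 q.2 = a ∧ P q.1} = L * #{i | P i} :=
  Finset.card_filter_and_fst (fun i j => G i j = a) P fun i => hG.1 i a

lemma IsFreqSquare.card_filter_and_snd (hG : IsFreqSquare L G) (a : Fin m) (P : Fin n → Prop)
    [DecidablePred P] : #{q : Fin n × Fin n | G q.1 q.2 = a ∧ P q.2} = L * #{j | P j} :=
  Finset.card_filter_and_snd (fun i j => G i j = a) P fun j => hG.2 j a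

lemma IsFreqSquare.card_filter_eq (hG : IsFreqSquare L G) (a : Fin m) :
    #{q : Fin n × Fin n | G q.1 q.2 = a} = L * n := by
  simpa using hG.card_filter_and_fst a fun _ => True

end FreqSquare

namespace MOFS

variable {n m k : ℕ}

section Balanced

variable (F : Fin k → Fin n → Fin n → Fin m)

def IsBalanced (Y : Fin n × Fin n → ℚ) : Prop :=
  (∀ i, ∑ q with q.1 = i, Y q = 0) ∧ (∀ j, ∑ q with q.2 = j, Y q = 0) ∧
    ∀ t a, ∑ q with F t q.1 q.2 = a, Y q = 0

/-- For mutually orthogonal frequency squares of type `(n; L)`, the orthogonal projection of the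
unit vector at `p` onto the span of the indicators of rows, columns and symbol classes. -/
def cellProj (L : ℕ) (p q : Fin n × Fin n) : ℚ :=
  ((if q.1 = p.1 then 1 else 0) + (if q.2 = p.2 then 1 else 0)) / n
    + #{t | F t q.1 q.2 = F t p.1 p.2} / (n * L) - (k + 1) / n ^ 2

lemma sum_mul_cellProj (L : ℕ) (p : Fin n × Fin n) (W : Fin n × Fin n → ℚ) :
    ∑ q, W q * cellProj F L p q =
      ((∑ q with q.1 = p.1, W q) + ∑ q with q.2 = p.2, W q) / n
        + (∑ t, ∑ q with F t q.1 q.2 = F t p.1 p.2, W q) / (n * L)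
        - (k + 1) * (∑ q, W q) / n ^ 2 := by
  have hq : ∀ q, W q * cellProj F L p q =
      (W q * (if q.1 = p.1 then 1 else 0) + W q * (if q.2 = p.2 then 1 else 0)) / n
        + W q * #{t | F t q.1 q.2 = F t p.1 p.2} / (n * L) - (k + 1) * W q / n ^ 2 := by
    intro q
    rw [cellProj]
    ring
  have hclass : ∑ q, W q * #{t | F t q.1 q.2 = F t p.1 p.2} =
      ∑ t, ∑ q with F t q.1 q.2 = F t p.1 p.2, W q := by
    simp only [natCast_card_filter, mul_sum, mul_boole, sum_filter]
    exact sum_comm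
  simp only [hq, sum_add_distrib, sum_sub_distrib, ← sum_div, ← mul_sum, hclass, mul_boole,
    sum_filter]

variable {F}

lemma IsBalanced.sum_eq_zero {Y : Fin n × Fin n → ℚ} (hY : IsBalanced F Y) : ∑ q, Y q = 0 := by
  rw [← sum_fiberwise univ Prod.fst]
  exact Finset.sum_eq_zero fun i _ => hY.1 i

lemma IsBalanced.sum_mul_cellProj_eq_zero {Y : Fin n × Fin n → ℚ} (hY : IsBalanced F Y)
    (L : ℕ) (p : Fin n × Fin n) : ∑ q, Y q * cellProj F L p q = 0 := by
  simp [sum_mul_cellProj, hY.1, hY.2.1, hY.2.2, hY.sum_eq_zero]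

section

variable {L : ℕ} (hn : n ≠ 0) (hL : L ≠ 0) (p : Fin n × Fin n)
include hn hL

lemma sum_cellProj_row (hF : ∀ t, IsFreqSquare L (F t)) (i : Fin n) :
    ∑ q with q.1 = i, cellProj F L p q = if p.1 = i then 1 else 0 := by
  have hagree : ∑ j, (#{t | F t i j = F t p.1 p.2} : ℚ) = k * L := by
    simp only [natCast_card_filter]
    rw [sum_comm]
    simp [(hF _).1]
  rw [sum_filter_fst_eq]
  simp only [cellProj, sum_sub_distrib, sum_add_distrib, ← sum_div, hagree, sum_const,
    card_univ, Fintype.card_fin, sum_ite_eq', mem_univ, if_true, nsmul_eq_mul, eq_comm (a := i)]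
  split_ifs <;> field_simp <;> ring

lemma sum_cellProj_col (hF : ∀ t, IsFreqSquare L (F t)) (j : Fin n) :
    ∑ q with q.2 = j, cellProj F L p q = if p.2 = j then 1 else 0 := by
  have hagree : ∑ i, (#{t | F t i j = F t p.1 p.2} : ℚ) = k * L := by
    simp only [natCast_card_filter]
    rw [sum_comm]
    simp [(hF _).2]
  rw [sum_filter_snd_eq]
  simp only [cellProj, sum_sub_distrib, sum_add_distrib, ← sum_div, hagree, sum_const,
    card_univ, Fintype.card_fin, sum_ite_eq', mem_univ, if_true, nsmul_eq_mul, eq_comm (a := j)]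
  split_ifs <;> field_simp <;> ring

lemma sum_cellProj_class (hF : ∀ t, IsFreqSquare L (F t))
    (horth : ∀ s t, s ≠ t → AreOrth L (F s) (F t)) (u : Fin k)
    (b : Fin m) :
    ∑ q with F u q.1 q.2 = b, cellProj F L p q = if F u p.1 p.2 = b then 1 else 0 := by
  have hself : #{q : Fin n × Fin n | F u q.1 q.2 = b ∧ F u q.1 q.2 = F u p.1 p.2} =
      if F u p.1 p.2 = b then L * n else 0 := by
    split_ifs with h
    · simp [h, (hF u).card_filter_eq]
    · rw [card_eq_zero, filter_eq_empty_iff]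
      rintro q - ⟨hb, hp⟩
      exact h (hp ▸ hb)
  have hsum : ∑ t, #{q ∈ {q : Fin n × Fin n | F u q.1 q.2 = b} | F t q.1 q.2 = F t p.1 p.2} =
      (if F u p.1 p.2 = b then L * n else 0) + (k - 1) * L ^ 2 := by
    have hother : ∀ t ∈ univ.erase u,
        #{q ∈ {q : Fin n × Fin n | F u q.1 q.2 = b} | F t q.1 q.2 = F t p.1 p.2} = L ^ 2 :=
      fun t ht => by rw [filter_filter]; exact horth u t (ne_of_mem_erase ht).symm _ _
    rw [← add_sum_erase _ _ (mem_univ u), filter_filter, hself, sum_congr rfl hother, sum_const,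
      card_erase_of_mem (mem_univ u), card_univ, Fintype.card_fin, smul_eq_mul]
  have hagree : ∑ q : Fin n × Fin n with F u q.1 q.2 = b,
      (#{t | F t q.1 q.2 = F t p.1 p.2} : ℚ) =
      (if F u p.1 p.2 = b then L * n else 0) + (k - 1) * L ^ 2 := by
    rw [← Nat.cast_sum, sum_card_filter_comm, hsum]
    push_cast [Nat.cast_sub u.pos]
    split_ifs <;> simp
  have hrow : #{q : Fin n × Fin n | F u q.1 q.2 = b ∧ q.1 = p.1} = L := by
    simp [(hF u).card_filter_and_fst b (· = p.1), filter_eq']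
  have hcol : #{q : Fin n × Fin n | F u q.1 q.2 = b ∧ q.2 = p.2} = L := by
    simp [(hF u).card_filter_and_snd b (· = p.2), filter_eq']
  simp only [cellProj, sum_sub_distrib, sum_add_distrib, ← sum_div, hagree, sum_const, sum_boole,
    filter_filter, nsmul_eq_mul, hrow, hcol, (hF u).card_filter_eq]
  push_cast
  split_ifs <;> field_simp <;> ring

lemma cellProj_self (hnL : n = m * L) (hcomplete : k * (m - 1) = (n - 1) ^ 2) :
    cellProj F L p p = 1 := by
  have hm : 1 ≤ m := Nat.pos_of_ne_zero (left_ne_zero_of_mul (hnL ▸ hn))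
  have hk : (k : ℚ) * (m - 1) = (n - 1) ^ 2 := by
    have := congrArg (Nat.cast : ℕ → ℚ) hcomplete
    push_cast [Nat.cast_sub hm, Nat.cast_sub (Nat.pos_of_ne_zero hn)] at this
    exact this
  have hnL' : (n : ℚ) = m * L := by exact_mod_cast hnL
  simp only [cellProj, if_true, filter_true, card_univ, Fintype.card_fin]
  field_simp
  rw [hnL'] at hk ⊢
  linear_combination (L : ℚ) * hk

lemma cellProj_eq_single (hF : ∀ t, IsFreqSquare L (F t))
    (horth : ∀ s t, s ≠ t → AreOrth L (F s) (F t)) (hnL : n = m * L)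
    (hcomplete : k * (m - 1) = (n - 1) ^ 2) : cellProj F L p = Pi.single p 1 := by
  set e : Fin n × Fin n → ℚ := Pi.single p 1
  set D := cellProj F L p - e
  have hD : IsBalanced F D := by
    refine ⟨fun i => ?_, fun j => ?_, fun t a => ?_⟩ <;>
      simp [D, e, sum_sub_distrib, sum_pi_single', sum_cellProj_row hn hL p hF,
        sum_cellProj_col hn hL p hF, sum_cellProj_class hn hL p hF horth]
  have hDp : D p = 0 := by simp [D, e, cellProj_self hn hL p hnL hcomplete]
  have hDD : ∑ q, D q * D q = 0 := by
    calc ∑ q, D q * D q = ∑ q, D q * cellProj F L p q - ∑ q, D q * e q := by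
          simp only [← sum_sub_distrib, ← mul_sub, D, Pi.sub_apply]
      _ = 0 := by simp [hD.sum_mul_cellProj_eq_zero, e, Pi.single_apply, hDp]
  funext q
  exact sub_eq_zero.1 ((sum_mul_self_eq_zero_iff _ _).1 hDD q (mem_univ q))

theorem eq_zero_of_isBalanced (hF : ∀ t, IsFreqSquare L (F t))
    (horth : ∀ s t, s ≠ t → AreOrth L (F s) (F t)) (hnL : n = m * L)
    (hcomplete : k * (m - 1) = (n - 1) ^ 2) {Y : Fin n × Fin n → ℚ} (hY : IsBalanced F Y) :
    Y = 0 := by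
  funext p
  have := hY.sum_mul_cellProj_eq_zero L p
  simpa [cellProj_eq_single hn hL p hF horth hnL hcomplete, Pi.single_apply] using this

end

end Balanced

section Dilation

variable (d : ℕ) (hd : 0 < d)

def blockOf (x : Fin (d * n)) : Fin n :=
  ⟨x / d, (Nat.div_lt_iff_lt_mul hd).2 (Nat.lt_of_lt_of_eq x.2 (Nat.mul_comm d n))⟩

lemma blockOf_finProdFinEquiv (z : Fin n × Fin d) :
    blockOf d hd (finCongr (mul_comm n d) (finProdFinEquiv z)) = z.1 := by
  ext
  simp [blockOf, Nat.add_mul_div_left _ _ hd, Nat.div_eq_of_lt z.2.isLt]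

lemma card_blockOf_eq (i : Fin n) : #{x | blockOf d hd x = i} = d := by
  rw [← card_equiv (finProdFinEquiv.trans (finCongr (mul_comm n d)))
    (s := {z : Fin n × Fin d | z.1 = i}), card_filter_fst_eq, Fintype.card_fin]
  intro z
  simp only [mem_filter, mem_univ, true_and, Equiv.trans_apply, blockOf_finProdFinEquiv]

def blockCount (G : Fin (d * n) → Fin (d * n) → Fin m) (b : Fin m) (p : Fin n × Fin n) : ℕ :=
  #{q : Fin (d * n) × Fin (d * n) | G q.1 q.2 = b ∧ (blockOf d hd q.1, blockOf d hd q.2) = p}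

lemma sum_blockCount (G : Fin (d * n) → Fin (d * n) → Fin m) (b : Fin m)
    (P : Fin n × Fin n → Prop) [DecidablePred P] :
    ∑ p with P p, blockCount d hd G b p =
      #{q : Fin (d * n) × Fin (d * n) |
        G q.1 q.2 = b ∧ P (blockOf d hd q.1, blockOf d hd q.2)} := by
  simpa [blockCount, filter_filter] using
    sum_card_fiberwise_eq_card_filter {q : Fin (d * n) × Fin (d * n) | G q.1 q.2 = b} {p | P p}
      fun q => (blockOf d hd q.1, blockOf d hd q.2)

lemma isBalanced_blockCount {L : ℕ} {F : Fin k → Fin n → Fin n → Fin m}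
    (hF : ∀ t, IsFreqSquare L (F t)) {G : Fin (d * n) → Fin (d * n) → Fin m}
    (hG : IsFreqSquare (d * L) G) (hGorth : ∀ t, AreOrth (d * L) (dilate d hd (F t)) G)
    (hnL : n = m * L) (b : Fin m) :
    IsBalanced F fun p => m * blockCount d hd G b p - d ^ 2 := by
  have hsum : ∀ (P : Fin n × Fin n → Prop) [DecidablePred P],
      ∑ p with P p, ((m : ℚ) * blockCount d hd G b p - d ^ 2) =
        m * #{q : Fin (d * n) × Fin (d * n) |
          G q.1 q.2 = b ∧ P (blockOf d hd q.1, blockOf d hd q.2)} - #{p | P p} * d ^ 2 := by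
    intro P _
    rw [sum_sub_distrib, ← mul_sum, ← Nat.cast_sum, sum_blockCount, sum_const, nsmul_eq_mul]
  refine ⟨fun i => ?_, fun j => ?_, fun t a => ?_⟩
  · rw [hsum]
    simp only [hG.card_filter_and_fst b (blockOf d hd · = i), card_blockOf_eq,
      card_filter_fst_eq, Fintype.card_fin]
    push_cast [hnL]
    ring
  · rw [hsum]
    simp only [hG.card_filter_and_snd b (blockOf d hd · = j), card_blockOf_eq,
      card_filter_snd_eq, Fintype.card_fin]
    push_cast [hnL]
    ring
  · have horth : #{q : Fin (d * n) × Fin (d * n) |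
        G q.1 q.2 = b ∧ F t (blockOf d hd q.1) (blockOf d hd q.2) = a} = (d * L) ^ 2 := by
      rw [← hGorth t a b]
      -- `dilate d hd F x y` unfolds to `F (blockOf d hd x) (blockOf d hd y)`
      exact congrArg card (filter_congr fun q _ => and_comm)
    rw [hsum, horth, (hF t).card_filter_eq]
    push_cast [hnL]
    ring

end Dilation

end MOFS

theorem stmt3_general (n m k d : ℕ) (hn : 0 < n) (hmn : m ∣ n) (hd : 0 < d)
    (F : Fin k → Fin n → Fin n → Fin m)
    (hF : ∀ t, IsFreqSquare (n / m) (F t))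
    (horth : ∀ s t, s ≠ t → AreOrth (n / m) (F s) (F t))
    (hcomplete : k * (m - 1) = (n - 1) ^ 2)
    (hd2 : ¬ m ∣ d ^ 2) :
    IsMaxFamily (d * n / m) (fun t => dilate d hd (F t)) := by
  rintro ⟨G, hG, hGorth⟩
  have hnL : n = m * (n / m) := (Nat.mul_div_cancel' hmn).symm
  have hL : n / m ≠ 0 := fun h => hn.ne' (by rw [hnL, h, mul_zero])
  rw [Nat.mul_div_assoc d hmn] at hG hGorth
  have hY := MOFS.eq_zero_of_isBalanced hn.ne' hL hF horth hnL hcomplete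
    (MOFS.isBalanced_blockCount d hd hF hG hGorth hnL ⟨0, Nat.pos_of_dvd_of_pos hmn hn⟩)
  have hcell := sub_eq_zero.1 (congrFun hY (⟨0, hn⟩, ⟨0, hn⟩))
  exact hd2 ⟨_, by exact_mod_cast hcell.symm⟩

theorem stmt3 (n m k d : ℕ) (hn : 0 < n) (hm : 2 ≤ m) (hmn : m ∣ n) (hd : 0 < d)
    (F : Fin k → Fin n → Fin n → Fin m)
    (hF : ∀ t, IsFreqSquare (n / m) (F t))
    (horth : ∀ s t, s ≠ t → AreOrth (n / m) (F s) (F t))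
    (hcomplete : k * (m - 1) = (n - 1) ^ 2)
    (hd2 : ¬ m ∣ d ^ 2) :
    IsMaxFamily (d * n / m) (fun t => dilate d hd (F t)) :=
  stmt3_general n m k d hn hmn hd F hF horth hcomplete hd2
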